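/- For every even integer N ≥ 2, the full contraction of G_N equals N!!·D·(D+2)⋯(D+N−2): Σ over i_1,…,i_N of δ_{i_1 i_2}δ_{i_3 i_4}⋯δ_{i_{N−1} i_N}·G_N^{i_1…i_N} = N!!·Π_{j=0}^{N/2−1}(D+2j). -/

import Mathlib

open scoped BigOperators

noncomputable section
namespace Fuzzy

/-- The completely symmetric `O(D)`-isotropic tensor
`G_N^{i_1…i_N} = Σ_{π ∈ S_N} δ^{i_{π(1)} i_{π(2)}} ⋯ δ^{i_{π(N−1)} i_{π(N)}}`
of even rank `N = 2M`. -/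
def GN (D M : ℕ) (i : Fin (2 * M) → Fin D) : ℂ :=
  ∑ π : Equiv.Perm (Fin (2 * M)), ∏ m : Fin M,
    (if i (π ⟨2 * m.val, by have := m.isLt; omega⟩) =
        i (π ⟨2 * m.val + 1, by have := m.isLt; omega⟩) then 1 else 0)

/-!
Contracting `G_N` with `δ^{⊗M}` counts pairs (permutation `π`, colouring `i`) such that `i` is
constant on the standard pairs `{2m, 2m+1}` and on the pairs `{π(2m), π(2m+1)}`. Replace the
standard pairing by an arbitrary pairing `q : Fin (2M) → γ` and sum over colourings `j : γ → β`;
the total `S_M` depends only on `M` and `|β|`. Fix `π(0)` and `π(1)`. In one of the `2M + 1`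
choices of `π(1)` both points lie in the same pair of `q`, which then imposes nothing, and its
colour is free: a factor `|β|`. In the other `2M` choices the constraint glues the two pairs of
`q` containing them into a single pair of the remaining `2M` points.
Hence `S_{M+1} = (2M + 2)(|β| + 2M) S_M`.
-/

open Finset Equiv

section Pairs

variable {M : ℕ}

def pairFst (m : Fin M) : Fin (2 * M) := ⟨2 * m.val, by have := m.isLt; omega⟩

def pairSnd (m : Fin M) : Fin (2 * M) := ⟨2 * m.val + 1, by have := m.isLt; omega⟩

def pairOf (a : Fin (2 * M)) : Fin M := ⟨a.val / 2, by have := a.isLt; omega⟩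

lemma pairOf_pairFst (m : Fin M) : pairOf (pairFst m) = m := by
  ext; simp [pairOf, pairFst]

lemma pairOf_pairSnd (m : Fin M) : pairOf (pairSnd m) = m := by
  ext; simp [pairOf, pairSnd]; omega

lemma pairFst_pairOf_or_pairSnd_pairOf (a : Fin (2 * M)) :
    pairFst (pairOf a) = a ∨ pairSnd (pairOf a) = a := by
  simp only [pairFst, pairSnd, pairOf, Fin.ext_iff]; omega

lemma pairFst_zero : pairFst (0 : Fin (M + 1)) = 0 := rfl

lemma pairSnd_zero : pairSnd (0 : Fin (M + 1)) = 1 := by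
  ext; simp [pairSnd]

lemma pairFst_succ (m : Fin M) : pairFst m.succ = (pairFst m).succ.succ := by
  ext; simp [pairFst]; ring

lemma pairSnd_succ (m : Fin M) : pairSnd m.succ = (pairSnd m).succ.succ := by
  ext; simp [pairSnd]; ring

end Pairs

/-- `q` encodes a perfect matching of `α`: two points are matched iff they have the same label. -/
def IsPairing {α γ : Type*} [Fintype α] [DecidableEq γ] (q : α → γ) : Prop :=
  ∀ z, #{a | q a = z} = 2

lemma isPairing_pairOf (M : ℕ) : IsPairing (pairOf : Fin (2 * M) → Fin M) := by
  intro m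
  have hfib : ({a | pairOf a = m} : Finset (Fin (2 * M))) = {pairFst m, pairSnd m} := by
    ext a
    simp only [mem_filter, mem_univ, true_and, mem_insert, mem_singleton, pairOf, pairFst,
      pairSnd, Fin.ext_iff]
    omega
  rw [hfib, card_pair]
  simp [pairFst, pairSnd, Fin.ext_iff]

lemma card_filter_eq_of_perm_succ {n : ℕ} (h : Perm (Fin (n + 1))) (P : Fin (n + 1) → Prop)
    [DecidablePred P] : #{w | P w} = (if P (h 0) then 1 else 0) + #{y : Fin n | P (h y.succ)} := by
  rw [← Fin.card_filter_univ_succ' (fun i => P (h i))]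
  simp only [card_filter]
  exact (Equiv.sum_comp h fun w => if P w then 1 else 0).symm

lemma card_filter_eq_of_perm_succ_succ {n : ℕ} (h : Perm (Fin (n + 2))) (P : Fin (n + 2) → Prop)
    [DecidablePred P] : #{w | P w} = (if P (h 0) then 1 else 0) + (if P (h 1) then 1 else 0) +
      #{a : Fin n | P (h a.succ.succ)} := by
  rw [card_filter_eq_of_perm_succ h, Fin.card_filter_univ_succ', Fin.succ_zero_eq_one]
  exact (add_assoc _ _ _).symm

/-- Every permutation `π` with `π 0 = x` and `π 1 = swap 0 x y.succ` is `headPerm x y` after a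
permutation of the last `n` points. -/
def headPerm {n : ℕ} (x : Fin (n + 2)) (y : Fin (n + 1)) : Perm (Fin (n + 2)) :=
  Perm.decomposeFin.symm (x, Perm.decomposeFin.symm (y, 1))

lemma headPerm_zero {n : ℕ} (x : Fin (n + 2)) (y : Fin (n + 1)) : headPerm x y 0 = x :=
  Perm.decomposeFin_symm_apply_zero _ _

lemma headPerm_one {n : ℕ} (x : Fin (n + 2)) (y : Fin (n + 1)) :
    headPerm x y 1 = swap 0 x y.succ := by
  simp [headPerm, Perm.decomposeFin_symm_apply_one]

lemma decomposeFin_symm_decomposeFin_symm_apply_succ_succ {n : ℕ} (x : Fin (n + 2))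
    (y : Fin (n + 1)) (σ : Perm (Fin n)) (a : Fin n) :
    Perm.decomposeFin.symm (x, Perm.decomposeFin.symm (y, σ)) a.succ.succ =
      headPerm x y (σ a).succ.succ := by
  simp [headPerm, Perm.decomposeFin_symm_apply_succ]

def pairedPermCount {β : Type*} [DecidableEq β] (M : ℕ) (c : Fin (2 * M) → β) : ℕ :=
  ∑ π : Perm (Fin (2 * M)), ∏ m : Fin M, if c (π (pairFst m)) = c (π (pairSnd m)) then 1 else 0

lemma pairedPermCount_succ {β : Type*} [DecidableEq β] (M : ℕ) (c : Fin (2 * M + 2) → β) :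
    pairedPermCount (M + 1) c = ∑ x : Fin (2 * M + 2), ∑ y : Fin (2 * M + 1),
      (if c (headPerm x y 0) = c (headPerm x y 1) then 1 else 0) *
        pairedPermCount M (fun a => c (headPerm x y a.succ.succ)) := by
  refine ((Perm.decomposeFin (n := 2 * M + 1)).symm.sum_comp _).symm.trans ?_
  rw [Fintype.sum_prod_type]
  refine sum_congr rfl fun x _ => ?_
  rw [← (Perm.decomposeFin (n := 2 * M)).symm.sum_comp, Fintype.sum_prod_type]
  refine sum_congr rfl fun y _ => ?_
  rw [pairedPermCount, mul_sum]
  refine sum_congr rfl fun σ _ => ?_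
  rw [Fin.prod_univ_succ, pairFst_zero, pairSnd_zero, headPerm_zero, headPerm_one,
    Perm.decomposeFin_symm_apply_zero, Perm.decomposeFin_symm_apply_one,
    Perm.decomposeFin_symm_apply_zero]
  simp only [pairFst_succ, pairSnd_succ, decomposeFin_symm_decomposeFin_symm_apply_succ_succ]

section Merge

variable {γ : Type*} [DecidableEq γ]

def mergeInto {a b : γ} (hab : a ≠ b) (z : γ) : {z // z ≠ b} :=
  if h : z = b then ⟨a, hab⟩ else ⟨z, h⟩

lemma val_mergeInto {a b : γ} (hab : a ≠ b) (z : γ) :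
    (mergeInto hab z).1 = if z = b then a else z := by
  unfold mergeInto; split_ifs <;> rfl

end Merge

section FunctionSums

variable {γ β R : Type*} [Fintype γ] [DecidableEq γ] [Fintype β] [AddCommMonoid R]

lemma sum_fun_restrict_ne (b : γ) (F : ({z // z ≠ b} → β) → R) :
    ∑ j : γ → β, F (fun z => j z) = Fintype.card β • ∑ k, F k := by
  have hsplit := Equiv.sum_comp (funSplitAt b β) fun p => F p.2
  simp only [funSplitAt_apply] at hsplit
  rw [hsplit, Fintype.sum_prod_type_right, smul_sum]
  simp

lemma sum_fun_ite_apply_eq [DecidableEq β] {a b : γ} (hab : a ≠ b) (F : (γ → β) → R) :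
    ∑ j : γ → β, (if j a = j b then F j else 0) =
      ∑ k : {z // z ≠ b} → β, F (fun z => k (mergeInto hab z)) := by
  rw [← Equiv.sum_comp (funSplitAt b β).symm, Fintype.sum_prod_type, sum_comm]
  refine sum_congr rfl fun k _ => ?_
  have hmerge : (funSplitAt b β).symm (k ⟨a, hab⟩, k) = fun z => k (mergeInto hab z) := by
    funext z
    by_cases hz : z = b <;> simp [funSplitAt_symm_apply, mergeInto, hz]
  simp [funSplitAt_symm_apply, hab, hmerge]

end FunctionSums

section Step

variable {γ : Type*} [DecidableEq γ]

lemma IsPairing.card_filter_eq_or_eq {α : Type*} [Fintype α] {p : α → γ} (hp : IsPairing p)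
    {z z' : γ} (hzz' : z ≠ z') : #{w | p w = z ∨ p w = z'} = 4 := by
  classical
  rw [filter_or, card_union_of_disjoint, hp, hp]
  exact disjoint_filter.2 fun w _ hz hz' => hzz' (hz.symm.trans hz')

variable {n : ℕ} (h : Perm (Fin (n + 2))) {q : Fin (n + 2) → γ}

lemma apply_succ_succ_ne_of_eq (hq : IsPairing q) (hs : q (h 0) = q (h 1)) (a : Fin n) :
    q (h a.succ.succ) ≠ q (h 0) := by
  have hcard := card_filter_eq_of_perm_succ_succ h fun w => q w = q (h 0)
  rw [hq, if_pos rfl, if_pos hs.symm] at hcard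
  have hempty : #{a : Fin n | q (h a.succ.succ) = q (h 0)} = 0 := by omega
  rw [card_eq_zero, filter_eq_empty_iff] at hempty
  exact hempty (mem_univ a)

lemma isPairing_restrict_of_eq (hq : IsPairing q) (hs : q (h 0) = q (h 1)) :
    IsPairing fun a : Fin n =>
      (⟨q (h a.succ.succ), apply_succ_succ_ne_of_eq h hq hs a⟩ : {z // z ≠ q (h 0)}) := by
  intro z
  have hcard := card_filter_eq_of_perm_succ_succ h fun w => q w = z.1
  rw [hq, if_neg (Ne.symm z.2), if_neg (hs ▸ Ne.symm z.2)] at hcard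
  simp only [Subtype.ext_iff]
  omega

lemma isPairing_mergeInto_of_ne (hq : IsPairing q) (hd : q (h 0) ≠ q (h 1)) :
    IsPairing fun a : Fin n => mergeInto hd (q (h a.succ.succ)) := by
  intro z
  have hcard := card_filter_eq_of_perm_succ_succ h fun w => mergeInto hd (q w) = z
  simp only [Subtype.ext_iff, val_mergeInto] at hcard ⊢
  by_cases hz : z.1 = q (h 0)
  · have hiff : ∀ w, (if q w = q (h 1) then q (h 0) else q w) = z.1 ↔
        q w = q (h 0) ∨ q w = q (h 1) := by
      intro w; split_ifs <;> simp_all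
    simp only [hiff] at hcard ⊢
    simp only [hq.card_filter_eq_or_eq hd, true_or, if_true, hz] at hcard
    omega
  · have hiff : ∀ w, (if q w = q (h 1) then q (h 0) else q w) = z.1 ↔ q w = z.1 := by
      intro w; split_ifs with hw
      · exact iff_of_false (Ne.symm hz) (fun hz' => z.2 (hz'.symm.trans hw))
      · rfl
    simp only [hiff] at hcard ⊢
    rw [hq] at hcard
    simp only [if_true, if_neg (Ne.symm hz)] at hcard
    omega

end Step

universe u

section Induction

variable {β : Type*} [Fintype β] [DecidableEq β]

lemma sum_boole_mul_pairedPermCount {γ : Type u} [Fintype γ] [DecidableEq γ] {M t : ℕ}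
    (ih : ∀ {δ : Type u} [Fintype δ] [DecidableEq δ] (p : Fin (2 * M) → δ), IsPairing p →
      ∑ j : δ → β, pairedPermCount M (fun a => j (p a)) = t)
    (h : Perm (Fin (2 * M + 2))) {q : Fin (2 * M + 2) → γ} (hq : IsPairing q) :
    ∑ j : γ → β, (if j (q (h 0)) = j (q (h 1)) then 1 else 0) *
        pairedPermCount M (fun a => j (q (h a.succ.succ))) =
      (if q (h 0) = q (h 1) then Fintype.card β else 1) * t := by
  by_cases hs : q (h 0) = q (h 1)
  · have hone : ∀ j : γ → β, (if j (q (h 0)) = j (q (h 1)) then 1 else 0) = 1 :=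
      fun j => if_pos (congrArg j hs)
    simp only [hone, one_mul, if_pos hs]
    rw [← ih _ (isPairing_restrict_of_eq h hq hs)]
    exact (sum_fun_restrict_ne (q (h 0)) fun k => pairedPermCount M fun a =>
      k ⟨q (h a.succ.succ), apply_succ_succ_ne_of_eq h hq hs a⟩).trans (smul_eq_mul _ _)
  · simp only [boole_mul, if_neg hs, one_mul]
    rw [sum_fun_ite_apply_eq hs]
    exact ih _ (isPairing_mergeInto_of_ne h hq hs)

lemma card_filter_apply_swap_succ_eq {γ : Type*} [DecidableEq γ] {M : ℕ}
    {q : Fin (2 * M + 2) → γ} (hq : IsPairing q) (x : Fin (2 * M + 2)) :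
    #{y : Fin (2 * M + 1) | q x = q (swap 0 x y.succ)} = 1 := by
  have hcard := card_filter_eq_of_perm_succ (swap 0 x) fun w => q x = q w
  have hfib : #{w | q x = q w} = 2 := by simpa only [eq_comm] using hq (q x)
  rw [hfib, swap_apply_left, if_pos rfl] at hcard
  omega

lemma sum_ite_apply_swap_succ {γ : Type*} [DecidableEq γ] {M : ℕ}
    {q : Fin (2 * M + 2) → γ} (hq : IsPairing q) (x : Fin (2 * M + 2)) (c : ℕ) :
    ∑ y : Fin (2 * M + 1), (if q x = q (swap 0 x y.succ) then c else 1) = c + 2 * M := by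
  rw [sum_ite, sum_const, sum_const, filter_not, card_sdiff_of_subset (filter_subset _ _),
    card_filter_apply_swap_succ_eq hq x, card_univ, Fintype.card_fin, smul_eq_mul,
    smul_eq_mul, mul_one, one_mul]
  omega

theorem sum_pairedPermCount_comp_of_isPairing (M : ℕ) :
    ∀ {γ : Type u} [Fintype γ] [DecidableEq γ] (q : Fin (2 * M) → γ), IsPairing q →
      ∑ j : γ → β, pairedPermCount M (fun a => j (q a)) =
        (2 * M).doubleFactorial * ∏ k : Fin M, (Fintype.card β + 2 * k.val) := by
  induction M with
  | zero =>
    intro γ _ _ q hq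
    have : IsEmpty γ := ⟨fun z => by simpa using hq z⟩
    simp [pairedPermCount]
  | succ M ih =>
    intro γ _ _ q hq
    set t := (2 * M).doubleFactorial * ∏ k : Fin M, (Fintype.card β + 2 * k.val)
    calc ∑ j : γ → β, pairedPermCount (M + 1) (fun a => j (q a))
        = ∑ x : Fin (2 * M + 2), ∑ y : Fin (2 * M + 1), ∑ j : γ → β,
            (if j (q (headPerm x y 0)) = j (q (headPerm x y 1)) then 1 else 0) *
              pairedPermCount M (fun a => j (q (headPerm x y a.succ.succ))) := by
          simp only [pairedPermCount_succ]
          rw [sum_comm]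
          exact sum_congr rfl fun x _ => sum_comm
      _ = ∑ x : Fin (2 * M + 2), (Fintype.card β + 2 * M) * t := by
          refine sum_congr rfl fun x _ => ?_
          rw [← sum_ite_apply_swap_succ hq x, sum_mul]
          refine sum_congr rfl fun y _ => ?_
          rw [sum_boole_mul_pairedPermCount ih (headPerm x y) hq, headPerm_zero, headPerm_one]
      _ = (2 * (M + 1)).doubleFactorial * ∏ k : Fin (M + 1), (Fintype.card β + 2 * k.val) := by
          rw [sum_const, card_univ, Fintype.card_fin, smul_eq_mul, Fin.prod_univ_castSucc,
            show 2 * (M + 1) = 2 * M + 2 by ring, Nat.doubleFactorial_add_two]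
          simp only [Fin.val_castSucc, Fin.val_last, t]
          ring

end Induction

lemma sum_prod_boole_mul_eq_sum_comp_pairOf {β R : Type*} [Fintype β] [DecidableEq β]
    [CommSemiring R] {M : ℕ} (F : (Fin (2 * M) → β) → R) :
    ∑ i : Fin (2 * M) → β,
        (∏ m : Fin M, if i (pairFst m) = i (pairSnd m) then 1 else 0) * F i =
      ∑ j : Fin M → β, F (fun a => j (pairOf a)) := by
  have hboole : ∀ i : Fin (2 * M) → β,
      (∏ m : Fin M, if i (pairFst m) = i (pairSnd m) then 1 else 0) * F i =
        if ∀ m, i (pairFst m) = i (pairSnd m) then F i else 0 := fun i => by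
    rw [Fintype.prod_boole, boole_mul]
    congr
  simp only [hboole]
  rw [← sum_filter]
  symm
  refine sum_nbij' (fun j a => j (pairOf a)) (fun i m => i (pairFst m)) ?_ (fun _ _ => mem_univ _)
    ?_ ?_ fun _ _ => rfl
  · intro j _
    simp [pairOf_pairFst, pairOf_pairSnd]
  · intro j _
    funext m
    simp [pairOf_pairFst]
  · intro i hi
    funext a
    rcases pairFst_pairOf_or_pairSnd_pairOf a with ha | ha
    · exact congrArg i ha
    · exact ((mem_filter.1 hi).2 (pairOf a)).trans (congrArg i ha)

/-- The full contraction of `G_N` equals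
`N!!·D·(D+2)⋯(D+N−2)` (with `N = 2M`). -/
theorem statement8 (D M : ℕ) :
    ∑ i : Fin (2 * M) → Fin D,
      (∏ m : Fin M,
        (if i ⟨2 * m.val, by have := m.isLt; omega⟩ =
            i ⟨2 * m.val + 1, by have := m.isLt; omega⟩ then (1 : ℂ) else 0)) * GN D M i =
      ((2 * M).doubleFactorial : ℂ) * ∏ j : Fin M, ((D : ℂ) + 2 * (j.val : ℂ)) := by
  have key := sum_prod_boole_mul_eq_sum_comp_pairOf (β := Fin D) (pairedPermCount M)
  rw [sum_pairedPermCount_comp_of_isPairing M pairOf (isPairing_pairOf M), Fintype.card_fin]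
    at key
  have hcast := congrArg (Nat.cast : ℕ → ℂ) key
  push_cast [pairedPermCount, Nat.cast_ite] at hcast
  exact hcast

end Fuzzy
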